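/- arXiv:1510.04479 — 2 statements merged into one kernel-verified Lean document; each statement's English description precedes it below -/
import Mathlib

section
/- The function W(x) = (1 + |x|^2/3)^{-1/2} on ℝ^3 satisfies the equation -ΔW = W^5, i.e., for all x ∈ ℝ^3, -ΔW(x) = W(x)^5. -/
open MeasureTheory

noncomputable def laplacianR (f : EuclideanSpace ℝ (Fin 3) → ℝ)
    (x : EuclideanSpace ℝ (Fin 3)) : ℝ :=
  ∑ i : Fin 3,
    fderiv ℝ (fun y => fderiv ℝ f y (EuclideanSpace.single i (1 : ℝ))) x
      (EuclideanSpace.single i (1 : ℝ))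

/-- The Aubin–Talenti ground state `W`. -/
noncomputable def groundStateW (x : EuclideanSpace ℝ (Fin 3)) : ℝ :=
  (Real.sqrt (1 + ‖x‖ ^ 2 / 3))⁻¹

/-!
Write `W x = φ (‖x‖ ^ 2)` with `φ t = (1 + t / 3) ^ (-1/2)`. For any such radial function the
second derivative along `v` is `4 φ'' ⟪x, v⟫² + 2 φ' ‖v‖²`, so in `ℝ³` the Laplacian is
`6 φ' + 4 ‖x‖² φ''`. With `u = 1 + ‖x‖² / 3` this gives
`-ΔW = u^(-3/2) - (u - 1) u^(-5/2) = u^(-5/2) = W⁵`.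
-/

open scoped RealInnerProductSpace

section RadialFunction

variable {E : Type*} [NormedAddCommGroup E] [InnerProductSpace ℝ E] {φ φ' : ℝ → ℝ}

theorem hasFDerivAt_comp_norm_sq {x : E} {d : ℝ} (hφ : HasDerivAt φ d (‖x‖ ^ 2)) :
    HasFDerivAt (fun y : E => φ (‖y‖ ^ 2)) ((2 * d) • innerSL ℝ x) x := by
  refine (hφ.comp_hasFDerivAt x (hasStrictFDerivAt_norm_sq x).hasFDerivAt).congr_fderiv ?_
  ext v
  simp only [smul_apply, coe_innerSL_apply, smul_eq_mul, nsmul_eq_mul]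
  push_cast
  ring

theorem fderiv_comp_norm_sq_apply {x : E} {d : ℝ} (hφ : HasDerivAt φ d (‖x‖ ^ 2)) (v : E) :
    fderiv ℝ (fun y : E => φ (‖y‖ ^ 2)) x v = 2 * d * ⟪x, v⟫ := by
  simp [(hasFDerivAt_comp_norm_sq hφ).fderiv]

theorem fderiv_fderiv_comp_norm_sq_apply {x : E} {φ'' : ℝ}
    (hφ : ∀ t, 0 ≤ t → HasDerivAt φ (φ' t) t) (hφ' : HasDerivAt φ' φ'' (‖x‖ ^ 2)) (v : E) :
    fderiv ℝ (fun y => fderiv ℝ (fun y : E => φ (‖y‖ ^ 2)) y v) x v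
      = 4 * φ'' * ⟪x, v⟫ ^ 2 + 2 * φ' (‖x‖ ^ 2) * ‖v‖ ^ 2 := by
  have hfirst : (fun y => fderiv ℝ (fun y : E => φ (‖y‖ ^ 2)) y v)
      = fun y => 2 * φ' (‖y‖ ^ 2) * ⟪v, y⟫ := by
    funext y
    rw [fderiv_comp_norm_sq_apply (hφ _ (sq_nonneg _)), real_inner_comm]
  have hderiv : HasFDerivAt (fun y => 2 * φ' (‖y‖ ^ 2) * ⟪v, y⟫) _ x :=
    ((hasFDerivAt_comp_norm_sq hφ').const_mul 2).mul (innerSL ℝ v).hasFDerivAt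
  rw [hfirst, hderiv.fderiv]
  simp only [add_apply, smul_apply, coe_innerSL_apply,
    smul_eq_mul, real_inner_self_eq_norm_sq, real_inner_comm x v]
  ring

end RadialFunction

theorem laplacianR_comp_norm_sq {φ φ' : ℝ → ℝ} {φ'' : ℝ} (x : EuclideanSpace ℝ (Fin 3))
    (hφ : ∀ t, 0 ≤ t → HasDerivAt φ (φ' t) t) (hφ' : HasDerivAt φ' φ'' (‖x‖ ^ 2)) :
    laplacianR (fun y => φ (‖y‖ ^ 2)) x = 6 * φ' (‖x‖ ^ 2) + 4 * ‖x‖ ^ 2 * φ'' := by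
  simp only [laplacianR, fderiv_fderiv_comp_norm_sq_apply hφ hφ']
  simp only [EuclideanSpace.inner_single_right,
    PiLp.norm_single, norm_one, one_pow, mul_one, one_mul, Finset.sum_add_distrib, ← Finset.mul_sum,
    Finset.sum_const, Finset.card_univ, Fintype.card_fin, nsmul_eq_mul, Nat.cast_ofNat, conj_trivial,
    EuclideanSpace.real_norm_sq_eq]
  ring

theorem hasDerivAt_one_add_div_rpow (c p : ℝ) {t : ℝ} (ht : 0 < 1 + t / c) :
    HasDerivAt (fun t => (1 + t / c) ^ p) (p / c * (1 + t / c) ^ (p - 1)) t := by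
  convert (((hasDerivAt_id' t).div_const c).const_add 1).rpow_const (p := p) (Or.inl ht.ne') using 1
  ring

theorem groundStateW_eq_rpow (x : EuclideanSpace ℝ (Fin 3)) :
    groundStateW x = (1 + ‖x‖ ^ 2 / 3) ^ (-(1 / 2) : ℝ) := by
  rw [groundStateW, Real.sqrt_eq_rpow, Real.rpow_neg (by positivity)]

theorem stmt0 : ∀ x : EuclideanSpace ℝ (Fin 3),
    -laplacianR groundStateW x = groundStateW x ^ 5 := by
  intro x
  have hφ (t : ℝ) (ht : 0 ≤ t) := hasDerivAt_one_add_div_rpow 3 (-(1 / 2)) (t := t) (by positivity)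
  have hφ' := (hasDerivAt_one_add_div_rpow 3 (-(1 / 2) - 1) (t := ‖x‖ ^ 2) (by positivity)).const_mul
    (-(1 / 2) / 3)
  rw [groundStateW_eq_rpow x, funext groundStateW_eq_rpow, laplacianR_comp_norm_sq x hφ hφ']
  set u := 1 + ‖x‖ ^ 2 / 3 with hu_def
  have hu : 0 < u := by positivity
  have hx : ‖x‖ ^ 2 = 3 * (u - 1) := by rw [hu_def]; ring
  have hu_pow : u ^ (-(1 / 2) - 1 : ℝ) = u * u ^ (-(1 / 2) - 1 - 1 : ℝ) := by
    rw [← Real.rpow_one_add' hu.le (by norm_num)]; norm_num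
  have hW_pow : (u ^ (-(1 / 2) : ℝ)) ^ 5 = u ^ (-(1 / 2) - 1 - 1 : ℝ) := by
    rw [← Real.rpow_natCast, ← Real.rpow_mul hu.le]; norm_num
  rw [hx, hu_pow, hW_pow]
  ring
end

section
/- There is a constant C > 0 such that for every radial φ ∈ Ḣ¹(ℝ^3) and every m ≥ 0: ∫_{|x|>m} |φ|⁶ dx ≤ C · ‖∇φ‖²_{L²(|x|>m)} · ‖φ/|x|‖⁴_{L²(|x|>m)}. -/
/-!
In polar coordinates the three integrals become one-dimensional integrals of the profile
`g r = φ (r • e)` against `r² dr`, and `∫ |φ|² / |x|²` becomes a constant times `∫ |g|² dr`.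
For `r > m`, the fundamental theorem of calculus on `(r, ∞)` (where `|g|²` is integrable,
hence tends to `0`) gives `|g r|² ≤ ∫ 2 |g| |g'| ≤ t ∫ |g|² + t⁻¹ ∫ |g'|²` for every `t > 0`;
optimising in `t` and using `|g'|² ≤ s² |g'|² / r²` yields
`r² |g r|⁴ ≤ 4 (∫ s² |g'|²) (∫ |g|²)`. Multiplying by `|g r|²` and integrating finishes the proof.
-/

open MeasureTheory Set Metric

theorem sq_le_four_mul_of_forall_le_mul_add_inv_mul {x a b : ℝ} (hx : 0 ≤ x) (ha : 0 ≤ a)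
    (hb : 0 ≤ b) (h : ∀ t > 0, x ≤ t * b + t⁻¹ * a) : x ^ 2 ≤ 4 * a * b := by
  have hquad : ∀ t : ℝ, 0 ≤ b * (t * t) + -x * t + a := fun t => by
    rcases le_or_gt t 0 with ht | ht
    · nlinarith
    · have := mul_le_mul_of_nonneg_left (h t ht) ht.le
      rw [mul_add, ← mul_assoc t t⁻¹, mul_inv_cancel₀ ht.ne', one_mul] at this
      linarith
  have := discrim_le_zero hquad
  rw [discrim] at this
  linarith

section Profile

variable {F : Type*} [NormedAddCommGroup F] [InnerProductSpace ℝ F] {g : ℝ → F} {D : ℝ → ℝ}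

theorem norm_sq_sq_le_of_integrableOn_Ioi (hg : ContDiff ℝ 1 g) (hD : ∀ s, ‖deriv g s‖ ≤ D s)
    {r : ℝ} (hg2 : IntegrableOn (fun s => ‖g s‖ ^ 2) (Ioi r))
    (hD2 : IntegrableOn (fun s => D s ^ 2) (Ioi r)) :
    (‖g r‖ ^ 2) ^ 2 ≤ 4 * (∫ s in Ioi r, D s ^ 2) * ∫ s in Ioi r, ‖g s‖ ^ 2 := by
  set h' : ℝ → ℝ := fun s => 2 * inner ℝ (g s) (deriv g s)
  have hderiv (s : ℝ) : HasDerivAt (fun s => ‖g s‖ ^ 2) (h' s) s :=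
    ((hg.differentiable one_ne_zero s).hasDerivAt).norm_sq
  have hbound (s : ℝ) : |h' s| ≤ 2 * ‖g s‖ * D s := by
    rw [abs_mul, abs_two, mul_assoc]
    gcongr
    exact (abs_real_inner_le_norm _ _).trans (by gcongr; exact hD s)
  have h'cont : Continuous h' := by
    have := hg.continuous; have := hg.continuous_deriv le_rfl; fun_prop
  have h'int : IntegrableOn h' (Ioi r) :=
    (hg2.fun_add hD2).mono' h'cont.aestronglyMeasurable (ae_of_all _ fun s =>
      (hbound s).trans (two_mul_le_add_sq _ _))
  have hftc : ∫ s in Ioi r, h' s = 0 - ‖g r‖ ^ 2 :=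
    integral_Ioi_of_hasDerivAt_of_tendsto' (fun s _ => hderiv s) h'int
      (tendsto_zero_of_hasDerivAt_of_integrableOn_Ioi (fun s _ => hderiv s) h'int hg2)
  refine sq_le_four_mul_of_forall_le_mul_add_inv_mul (by positivity)
    (setIntegral_nonneg measurableSet_Ioi fun _ _ => by positivity)
    (setIntegral_nonneg measurableSet_Ioi fun _ _ => by positivity) fun t ht => ?_
  calc ‖g r‖ ^ 2 = ∫ s in Ioi r, -h' s := by rw [integral_neg, hftc]; ring
    _ ≤ ∫ s in Ioi r, (t * ‖g s‖ ^ 2 + t⁻¹ * D s ^ 2) :=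
      setIntegral_mono h'int.neg ((hg2.const_mul t).fun_add (hD2.const_mul t⁻¹)) fun s =>
        (neg_le_abs _).trans ((hbound s).trans (two_mul_le_add_mul_sq ht))
    _ = t * (∫ s in Ioi r, ‖g s‖ ^ 2) + t⁻¹ * ∫ s in Ioi r, D s ^ 2 := by
      rw [integral_add (hg2.const_mul t) (hD2.const_mul t⁻¹), integral_const_mul,
        integral_const_mul]

theorem sq_mul_norm_sq_le (hg : ContDiff ℝ 1 g) (hDc : Continuous D)
    (hD : ∀ s, ‖deriv g s‖ ≤ D s) {m r : ℝ} (hr : 0 < r) (hmr : m ≤ r)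
    (hg2 : IntegrableOn (fun s => ‖g s‖ ^ 2) (Ioi m))
    (hD2 : IntegrableOn (fun s => s ^ 2 * D s ^ 2) (Ioi m)) :
    (r * ‖g r‖ ^ 2) ^ 2 ≤
      4 * (∫ s in Ioi m, s ^ 2 * D s ^ 2) * ∫ s in Ioi m, ‖g s‖ ^ 2 := by
  have hsub : Ioi r ⊆ Ioi m := Ioi_subset_Ioi hmr
  have hweight : ∀ s ∈ Ioi r, r ^ 2 * D s ^ 2 ≤ s ^ 2 * D s ^ 2 := fun s hs => by
    have : r ^ 2 ≤ s ^ 2 := pow_le_pow_left₀ hr.le (le_of_lt hs) 2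
    gcongr
  have hD2r : IntegrableOn (fun s => D s ^ 2) (Ioi r) := by
    refine ((hD2.mono_set hsub).div_const (r ^ 2)).mono' (hDc.pow 2).aestronglyMeasurable
      ((ae_restrict_iff' measurableSet_Ioi).mpr (ae_of_all _ fun s hs => ?_))
    rw [Real.norm_of_nonneg (by positivity), le_div_iff₀ (by positivity), mul_comm]
    exact hweight s hs
  have hA : r ^ 2 * ∫ s in Ioi r, D s ^ 2 ≤ ∫ s in Ioi m, s ^ 2 * D s ^ 2 :=
    calc r ^ 2 * ∫ s in Ioi r, D s ^ 2 = ∫ s in Ioi r, r ^ 2 * D s ^ 2 :=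
          (integral_const_mul _ _).symm
      _ ≤ ∫ s in Ioi r, s ^ 2 * D s ^ 2 :=
          setIntegral_mono_on (hD2r.const_mul _) (hD2.mono_set hsub) measurableSet_Ioi hweight
      _ ≤ ∫ s in Ioi m, s ^ 2 * D s ^ 2 :=
          setIntegral_mono_set hD2 (ae_of_all _ fun _ => by positivity) hsub.eventuallyLE
  have hB : ∫ s in Ioi r, ‖g s‖ ^ 2 ≤ ∫ s in Ioi m, ‖g s‖ ^ 2 :=
    setIntegral_mono_set hg2 (ae_of_all _ fun _ => by positivity) hsub.eventuallyLE
  have hpoint := norm_sq_sq_le_of_integrableOn_Ioi hg hD (hg2.mono_set hsub) hD2r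
  calc (r * ‖g r‖ ^ 2) ^ 2 = r ^ 2 * (‖g r‖ ^ 2) ^ 2 := by ring
    _ ≤ r ^ 2 * (4 * (∫ s in Ioi r, D s ^ 2) * ∫ s in Ioi r, ‖g s‖ ^ 2) := by gcongr
    _ = 4 * (r ^ 2 * ∫ s in Ioi r, D s ^ 2) * ∫ s in Ioi r, ‖g s‖ ^ 2 := by ring
    _ ≤ 4 * (∫ s in Ioi m, s ^ 2 * D s ^ 2) * ∫ s in Ioi m, ‖g s‖ ^ 2 := by gcongr

theorem integral_sq_mul_norm_pow_six_le (hg : ContDiff ℝ 1 g) (hDc : Continuous D)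
    (hD : ∀ s, ‖deriv g s‖ ≤ D s) {m : ℝ} (hm : 0 ≤ m)
    (hg2 : IntegrableOn (fun s => ‖g s‖ ^ 2) (Ioi m))
    (hD2 : IntegrableOn (fun s => s ^ 2 * D s ^ 2) (Ioi m)) :
    ∫ r in Ioi m, r ^ 2 * ‖g r‖ ^ 6 ≤
      4 * (∫ s in Ioi m, s ^ 2 * D s ^ 2) * (∫ s in Ioi m, ‖g s‖ ^ 2) ^ 2 := by
  set A := ∫ s in Ioi m, s ^ 2 * D s ^ 2
  set B := ∫ s in Ioi m, ‖g s‖ ^ 2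
  have hpoint : ∀ r ∈ Ioi m, r ^ 2 * ‖g r‖ ^ 6 ≤ 4 * A * B * ‖g r‖ ^ 2 := fun r hr => by
    calc r ^ 2 * ‖g r‖ ^ 6 = (r * ‖g r‖ ^ 2) ^ 2 * ‖g r‖ ^ 2 := by ring
      _ ≤ 4 * A * B * ‖g r‖ ^ 2 := by
        gcongr
        exact sq_mul_norm_sq_le hg hDc hD (hm.trans_lt hr) hr.le hg2 hD2
  calc ∫ r in Ioi m, r ^ 2 * ‖g r‖ ^ 6 ≤ ∫ r in Ioi m, 4 * A * B * ‖g r‖ ^ 2 :=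
        integral_mono_of_nonneg (ae_of_all _ fun _ => by positivity) (hg2.const_mul _)
          ((ae_restrict_iff' measurableSet_Ioi).mpr (ae_of_all _ hpoint))
    _ = 4 * A * B ^ 2 := by rw [integral_const_mul]; ring

end Profile

section Polar

variable {E F : Type*} [NormedAddCommGroup E] [NormedAddCommGroup F] {m : ℝ}

theorem indicator_setOf_lt_norm (f : ℝ → F) :
    {x : E | m < ‖x‖}.indicator (fun x => f ‖x‖) = fun x => (Ioi m).indicator f ‖x‖ :=
  funext fun _ => indicator_comp_right norm

variable [NormedSpace ℝ E] [Nontrivial E] [FiniteDimensional ℝ E] [MeasurableSpace E]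
  [BorelSpace E] (μ : Measure E) [μ.IsAddHaarMeasure] [NormedSpace ℝ F]

theorem setIntegral_lt_norm_fun_norm_addHaar (hm : 0 ≤ m) (f : ℝ → F) :
    ∫ x in {x : E | m < ‖x‖}, f ‖x‖ ∂μ =
      Module.finrank ℝ E • μ.real (ball 0 1) •
        ∫ y in Ioi m, y ^ (Module.finrank ℝ E - 1) • f y := by
  rw [← integral_indicator (measurableSet_lt measurable_const measurable_norm),
    indicator_setOf_lt_norm, integral_fun_norm_addHaar, ← indicator_smul,
    setIntegral_indicator measurableSet_Ioi, Ioi_inter_Ioi, max_eq_right hm]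

theorem integrableOn_lt_norm_fun_norm_addHaar_iff (hm : 0 ≤ m) {f : ℝ → F} :
    IntegrableOn (fun x : E => f ‖x‖) {x : E | m < ‖x‖} μ ↔
      IntegrableOn (fun y => y ^ (Module.finrank ℝ E - 1) • f y) (Ioi m) := by
  rw [← integrable_indicator_iff (measurableSet_lt measurable_const measurable_norm),
    indicator_setOf_lt_norm, integrable_fun_norm_addHaar, ← indicator_smul, IntegrableOn,
    integrable_indicator_iff measurableSet_Ioi, IntegrableOn,
    Measure.restrict_restrict measurableSet_Ioi, Ioi_inter_Ioi, max_eq_left hm]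
  rfl

end Polar

section Radial

variable {E F X : Type*} [NormedAddCommGroup E] [NormedAddCommGroup F] [NormedSpace ℝ F]

theorem apply_eq_apply_norm_smul [NormedSpace ℝ E] {φ : E → X}
    (hφ : ∀ x y : E, ‖x‖ = ‖y‖ → φ x = φ y) {e : E} (he : ‖e‖ = 1) (x : E) :
    φ x = φ (‖x‖ • e) :=
  hφ _ _ (by rw [norm_smul, he, mul_one, norm_norm])

theorem norm_fderiv_eq_of_norm_eq [InnerProductSpace ℝ E] {φ : E → F}
    (hφ : ∀ x y : E, ‖x‖ = ‖y‖ → φ x = φ y) {x y : E} (h : ‖x‖ = ‖y‖) :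
    ‖fderiv ℝ φ x‖ = ‖fderiv ℝ φ y‖ := by
  set T : E ≃ₗᵢ[ℝ] E := (ℝ ∙ (x - y))ᗮ.reflection
  have hφT : φ ∘ T = φ := funext fun z => hφ _ _ (T.norm_map z)
  calc ‖fderiv ℝ φ x‖ = ‖fderiv ℝ (φ ∘ T) x‖ := by rw [hφT]
    _ = ‖(fderiv ℝ φ (T x)).comp (T.toContinuousLinearEquiv : E →L[ℝ] E)‖ :=
      congrArg norm T.toContinuousLinearEquiv.comp_right_fderiv
    _ = ‖fderiv ℝ φ y‖ := by
      rw [(fderiv ℝ φ (T x)).opNorm_comp_linearIsometryEquiv T, Submodule.reflection_sub h]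

theorem norm_deriv_comp_smul_le [NormedSpace ℝ E] {φ : E → F} (hφ : Differentiable ℝ φ)
    (e : E) (r : ℝ) :
    ‖deriv (fun r : ℝ => φ (r • e)) r‖ ≤ ‖fderiv ℝ φ (r • e)‖ * ‖e‖ := by
  have : HasDerivAt (fun r : ℝ => φ (r • e)) (fderiv ℝ φ (r • e) e) r :=
    (hφ _).hasFDerivAt.comp_hasDerivAt r (by simpa using (hasDerivAt_id r).smul_const e)
  exact this.deriv ▸ (fderiv ℝ φ (r • e)).le_opNorm e

end Radial

local notation "ℝ³" => EuclideanSpace ℝ (Fin 3)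

/-- Exterior L⁶ estimate for radial functions:
`∫_{|x|>m} |φ|⁶ ≲ ‖∇φ‖²_{L²(|x|>m)} ‖φ/|x|‖⁴_{L²(|x|>m)}`. -/
theorem stmt6 : ∃ C > (0 : ℝ), ∀ φ : EuclideanSpace ℝ (Fin 3) → ℂ,
    ContDiff ℝ 1 φ →
    (∀ x y : EuclideanSpace ℝ (Fin 3), ‖x‖ = ‖y‖ → φ x = φ y) →
    ∀ m : ℝ, 0 ≤ m →
    Integrable (fun y => ‖fderiv ℝ φ y‖ ^ 2)
      (volume.restrict {y : EuclideanSpace ℝ (Fin 3) | m < ‖y‖}) →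
    Integrable (fun y => ‖φ y‖ ^ 2 / ‖y‖ ^ 2)
      (volume.restrict {y : EuclideanSpace ℝ (Fin 3) | m < ‖y‖}) →
    Integrable (fun y => ‖φ y‖ ^ 6)
      (volume.restrict {y : EuclideanSpace ℝ (Fin 3) | m < ‖y‖}) →
      (∫ y in {y : EuclideanSpace ℝ (Fin 3) | m < ‖y‖}, ‖φ y‖ ^ 6) ≤
        C * (∫ y in {y : EuclideanSpace ℝ (Fin 3) | m < ‖y‖}, ‖fderiv ℝ φ y‖ ^ 2) *
          (∫ y in {y : EuclideanSpace ℝ (Fin 3) | m < ‖y‖}, ‖φ y‖ ^ 2 / ‖y‖ ^ 2) ^ 2 := by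
  set c : ℝ := volume.real (ball (0 : ℝ³) 1)
  have hc : 0 < c :=
    ENNReal.toReal_pos (measure_ball_pos _ _ one_pos).ne' measure_ball_lt_top.ne
  refine ⟨4 / (9 * c ^ 2), by positivity, fun φ hφ hrad m hm hI1 hI2 _ => ?_⟩
  set e : ℝ³ := EuclideanSpace.single 0 1
  have he : ‖e‖ = 1 := by simp [e]
  set g : ℝ → ℂ := fun r => φ (r • e)
  set D : ℝ → ℝ := fun r => ‖fderiv ℝ φ (r • e)‖
  have hφg : ∀ y, φ y = g ‖y‖ := apply_eq_apply_norm_smul hrad he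
  have hφD : ∀ y, ‖fderiv ℝ φ y‖ = D ‖y‖ :=
    apply_eq_apply_norm_smul (fun _ _ => norm_fderiv_eq_of_norm_eq hrad) he
  have hpolar (f : ℝ → ℝ) :
      ∫ y in {y : ℝ³ | m < ‖y‖}, f ‖y‖ = 3 * c * ∫ r in Ioi m, r ^ 2 * f r := by
    simp [setIntegral_lt_norm_fun_norm_addHaar _ hm, c, mul_assoc]
  have hpolar_int (f : ℝ → ℝ) (hf : IntegrableOn (fun y : ℝ³ => f ‖y‖) {y | m < ‖y‖}) :
      IntegrableOn (fun r => r ^ 2 * f r) (Ioi m) := by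
    simpa using (integrableOn_lt_norm_fun_norm_addHaar_iff _ hm).mp hf
  have hweight : EqOn (fun r => r ^ 2 * (‖g r‖ ^ 2 / r ^ 2)) (fun r => ‖g r‖ ^ 2) (Ioi m) :=
    fun r hr => mul_div_cancel₀ _ (pow_ne_zero 2 (hm.trans_lt hr).ne')
  simp only [hφg, hφD] at hI1 hI2 ⊢
  rw [hpolar (fun r => ‖g r‖ ^ 6), hpolar (fun r => D r ^ 2),
    hpolar (fun r => ‖g r‖ ^ 2 / r ^ 2), setIntegral_congr_fun measurableSet_Ioi hweight]
  have hD : Continuous D := (hφ.continuous_fderiv one_ne_zero).norm.comp (by fun_prop)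
  have hcore := integral_sq_mul_norm_pow_six_le (g := g) (hφ.comp (by fun_prop)) hD
    (fun r => (norm_deriv_comp_smul_le (hφ.differentiable one_ne_zero) e r).trans_eq
      (by rw [he, mul_one]))
    hm ((hpolar_int (fun r => ‖g r‖ ^ 2 / r ^ 2) hI2).congr_fun hweight measurableSet_Ioi)
    (hpolar_int (fun r => D r ^ 2) hI1)
  calc 3 * c * ∫ r in Ioi m, r ^ 2 * ‖g r‖ ^ 6
      ≤ 3 * c * (4 * (∫ r in Ioi m, r ^ 2 * D r ^ 2) * (∫ r in Ioi m, ‖g r‖ ^ 2) ^ 2) := by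
        gcongr
    _ = _ := by field_simp; ring
end
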